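/- For each subdiagonal word d of length n, El(d) = {1,2,…,n−1} ∖ Eul(δ(r(d))). -/

import Mathlib

/-- Descent set (ligne of route) of a word, with 1-based positions. -/
def ligne (w : List ℕ) : Finset ℕ :=
  (Finset.Icc 1 (w.length - 1)).filter (fun i => w.getD (i-1) 0 > w.getD i 0)

/-- Major index of a word. -/
def maj (w : List ℕ) : ℕ := ∑ i ∈ ligne w, i

/-- Inversion number of a word. -/
def inv (w : List ℕ) : ℕ :=
  ((Finset.range w.length ×ˢ Finset.range w.length).filter
    (fun p => p.1 < p.2 ∧ w.getD p.1 0 > w.getD p.2 0)).card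

/-- `w` is (the one-line word of) a permutation of `1,…,n`. -/
def IsPermWord (n : ℕ) (w : List ℕ) : Prop := w.Perm (List.range' 1 n)

/-- One-line word of `σ ∈ S_n` with values in `1,…,n`. -/
def toWord {n : ℕ} (σ : Equiv.Perm (Fin n)) : List ℕ := List.ofFn (fun i => (σ i : ℕ) + 1)

/-- Subexcedent word: `0 ≤ d_i ≤ i-1` (1-based), i.e. `d_i ≤ i` for 0-based `i`. -/
def Subexcedent (w : List ℕ) : Prop := ∀ i < w.length, w.getD i 0 ≤ i

/-- Subdiagonal word: `0 ≤ d_i ≤ n-i` (1-based). -/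
def Subdiagonal (w : List ℕ) : Prop := ∀ i < w.length, w.getD i 0 + i + 1 ≤ w.length

/-- Lehmer code: `d_i = #{j < i : x_j > x_i}`. -/
def invcode (w : List ℕ) : List ℕ :=
  (List.range w.length).map (fun i => ((Finset.range i).filter (fun j => w.getD j 0 > w.getD i 0)).card)

/-- `Lc`-code: `d_i = #{j > i : x_i > x_j}`. -/
def lc (w : List ℕ) : List ℕ :=
  (List.range w.length).map (fun i => ((Finset.Ico (i+1) w.length).filter (fun j => w.getD i 0 > w.getD j 0)).card)

/-- Major index code: `d_i = maj(σ|_i) - maj(σ|_{i-1})`, where `σ|_i` erases letters `> i`. -/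
def majcode (w : List ℕ) : List ℕ :=
  (List.range w.length).map (fun i => maj (w.filter (· ≤ i+1)) - maj (w.filter (· ≤ i)))

/-- `Mc`-code: `d_i = maj(σ^{(i)}) - maj(σ^{(i+1)})`, where `σ^{(i)}` erases letters `< i`. -/
def mc (w : List ℕ) : List ℕ :=
  (List.range w.length).map (fun i => maj (w.filter (fun x => i+1 ≤ x)) - maj (w.filter (fun x => i+2 ≤ x)))

/-- One-line word of the inverse permutation. -/
def invWord (w : List ℕ) : List ℕ :=
  (List.range w.length).map (fun i => w.idxOf (i+1) + 1)

/-- `Ic σ = Lc (σ⁻¹)`. -/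
def ic (w : List ℕ) : List ℕ := lc (invWord w)

/-- Inverse ligne of route. -/
def iligne (w : List ℕ) : Finset ℕ := ligne (invWord w)

/-- Complement map `δ` on codes: `δ(d₁⋯d_n) = (0-d₁)(1-d₂)⋯(n-1-d_n)`. -/
def deltaC (w : List ℕ) : List ℕ :=
  (List.range w.length).map (fun i => i - w.getD i 0)

/-- Nondecreasing rearrangement of a word. -/
def sortW (w : List ℕ) : List ℕ := List.insertionSort (· ≤ ·) w

/-- Set-valued statistic `El = Ligne ∘ Mc⁻¹` on subdiagonal words. -/
noncomputable def El (d : List ℕ) : Finset ℕ := by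
  classical
  exact if h : ∃ w, IsPermWord d.length w ∧ mc w = d then ligne h.choose else ∅

/-- Set-valued statistic `Eul = Ligne ∘ Majcode⁻¹` on subexcedent words. -/
noncomputable def Eul (d : List ℕ) : Finset ℕ := by
  classical
  exact if h : ∃ w, IsPermWord d.length w ∧ majcode w = d then ligne h.choose else ∅

/-!
Write `c u` for the complement `x ↦ n + 1 - x` of a permutation `u` of `1,…,n`. Complementing a
word with distinct letters turns its descent set into the complementary subset of
`{1,…,m-1}`, and erasing the letters `≤ i` of `c u` gives the complement of the restriction of
`u` to its letters `≤ n - i`. Hence `maj (c u)^{(i+1)} = binom(n-i, 2) - maj (u|_{n-i})`, and as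
each increment `maj (u|_{j+1}) - maj (u|_j)` lies in `[0, j]` this gives
`r (Mc (c u)) = δ (Majcode u)`.

Inserting a letter larger than all letters of `u` into the `|u| + 1` slots of `u` raises `maj u`
by each of `0, …, |u|` exactly once, so `Majcode` is a bijection from permutations onto
subexcedent words, and `Mc` is injective. For subdiagonal `d` and `u = Majcode⁻¹ (δ (r d))` we
get `Mc (c u) = d`, whence
`El d = Ligne (c u) = {1,…,n-1} ∖ Ligne u = {1,…,n-1} ∖ Eul (δ (r d))`.
-/

open scoped Finset

lemma mem_ligne {w : List ℕ} {i : ℕ} :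
    i ∈ ligne w ↔ 1 ≤ i ∧ i < w.length ∧ w.getD i 0 < w.getD (i - 1) 0 := by
  simp only [ligne, Finset.mem_filter, Finset.mem_Icc]
  omega

lemma ligne_subset_Icc (w : List ℕ) : ligne w ⊆ Finset.Icc 1 (w.length - 1) :=
  Finset.filter_subset _ _

lemma maj_eq_sum_lt_add_sum_gt (u : List ℕ) (p : ℕ) :
    maj u = ∑ j ∈ (ligne u).filter (· < p), j + ∑ j ∈ (ligne u).filter (p < ·), j
      + if p ∈ ligne u then p else 0 := by
  have hp : (if p ∈ ligne u then p else 0) = ∑ j ∈ ligne u, if p = j then j else 0 := by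
    simp
  rw [maj, Finset.sum_filter, Finset.sum_filter, hp, ← Finset.sum_add_distrib,
    ← Finset.sum_add_distrib]
  refine Finset.sum_congr rfl fun j _ => ?_
  split_ifs <;> omega

lemma List.getD_insertIdx {α : Type*} {l : List α} {p : ℕ} (hp : p ≤ l.length) (d x : α)
    (j : ℕ) :
    (l.insertIdx p x).getD j d =
      if j < p then l.getD j d else if j = p then x else l.getD (j - 1) d := by
  simp only [List.getD_eq_getElem?_getD, List.getElem?_insertIdx]
  split_ifs <;> simp_all

lemma List.filter_insertIdx_of_neg {α : Type*} {q : α → Bool} {x : α} (hx : q x = false)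
    (l : List α) (p : ℕ) : (l.insertIdx p x).filter q = l.filter q := by
  induction l generalizing p with
  | nil => cases p <;> simp [hx]
  | cons a l ih => cases p <;> simp [hx, ih, List.filter_cons]

section InsertMax

variable {u : List ℕ} {p M : ℕ}

lemma ligne_insertIdx_of_forall_lt (hp : p ≤ u.length) (hM : ∀ x ∈ u, x < M) :
    ligne (u.insertIdx p M) =
      ((ligne u).filter (· < p) ∪ ((ligne u).filter (p < ·)).image (· + 1))
        ∪ if p < u.length then {p + 1} else ∅ := by
  have hlt : ∀ j < u.length, u.getD j 0 < M := fun j hj => by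
    rw [List.getD_eq_getElem _ _ hj]; exact hM _ (List.getElem_mem hj)
  ext i
  simp only [mem_ligne, List.length_insertIdx_of_le_length hp, List.getD_insertIdx hp 0 M,
    Finset.mem_union, Finset.mem_filter, Finset.mem_image]
  constructor
  · rintro ⟨h1, h2, h3⟩
    rcases lt_trichotomy i p with hip | rfl | hip
    · simp only [hip, if_true, show i - 1 < p by omega] at h3
      exact Or.inl (Or.inl ⟨⟨h1, by omega, h3⟩, hip⟩)
    · simp only [lt_irrefl, if_false, if_true, show i - 1 < i by omega] at h3
      exact absurd (hlt (i - 1) (by omega)) (by omega)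
    · rcases (show p + 1 = i ∨ p + 1 < i by omega) with rfl | hip1
      · right; simp [show p < u.length by omega]
      · simp only [show ¬ i < p by omega, show ¬ i - 1 < p by omega, show i ≠ p by omega,
          show i - 1 ≠ p by omega, if_false] at h3
        rw [show i - 1 - 1 = i - 2 by omega] at h3
        exact Or.inl (Or.inr ⟨i - 1, ⟨⟨by omega, by omega, h3⟩, by omega⟩, by omega⟩)
  · rintro ((⟨⟨h1, h2, h3⟩, hip⟩ | ⟨j, ⟨⟨h1, h2, h3⟩, hpj⟩, rfl⟩) | h)
    · simp only [hip, show i - 1 < p by omega, if_true]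
      exact ⟨h1, by omega, h3⟩
    · simp only [Nat.add_sub_cancel, show ¬ j + 1 < p by omega, show ¬ j < p by omega,
        show j + 1 ≠ p by omega, show j ≠ p by omega, if_false]
      exact ⟨by omega, by omega, h3⟩
    · split_ifs at h with hpL
      · obtain rfl := Finset.mem_singleton.mp h
        simp only [lt_irrefl, show ¬ p + 1 < p by omega, show p + 1 ≠ p by omega, if_false,
          if_true, Nat.add_sub_cancel]
        exact ⟨by omega, by omega, hlt p hpL⟩
      · simp at h

lemma maj_insertIdx_of_forall_lt (hp : p ≤ u.length) (hM : ∀ x ∈ u, x < M) :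
    maj (u.insertIdx p M) + (if p ∈ ligne u then p else 0)
      = maj u + #((ligne u).filter (p < ·)) + if p < u.length then p + 1 else 0 := by
  set D := ligne u
  have hdisj₁ : Disjoint (D.filter (· < p)) ((D.filter (p < ·)).image (· + 1)) := by
    simp only [Finset.disjoint_left, Finset.mem_filter, Finset.mem_image]
    omega
  have hdisj₂ : Disjoint (D.filter (· < p) ∪ (D.filter (p < ·)).image (· + 1))
      (if p < u.length then {p + 1} else ∅) := by
    split_ifs
    · simp only [Finset.disjoint_singleton_right, Finset.mem_union, Finset.mem_filter,
        Finset.mem_image]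
      omega
    · exact Finset.disjoint_empty_right _
  have hnew : ∑ i ∈ (if p < u.length then {p + 1} else ∅), i
      = if p < u.length then p + 1 else 0 := by
    split_ifs <;> simp
  rw [maj, ligne_insertIdx_of_forall_lt hp hM, Finset.sum_union hdisj₂, Finset.sum_union hdisj₁,
    Finset.sum_image (by simp), Finset.sum_add_distrib, Finset.sum_const, smul_eq_mul, mul_one,
    hnew, maj_eq_sum_lt_add_sum_gt u p]
  ring

lemma card_filter_lt_bounds {s : Finset ℕ} {p q : ℕ} (hpq : p < q) :
    #(s.filter (q < ·)) + (if q ∈ s then 1 else 0) ≤ #(s.filter (p < ·)) ∧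
      #(s.filter (p < ·)) ≤ #(s.filter (q < ·)) + (q - p - 1) + if q ∈ s then 1 else 0 := by
  have hsplit :
      #(s.filter (p < ·)) = #(s.filter (q < ·)) + #(s.filter (fun j => p < j ∧ j ≤ q)) := by
    rw [← Finset.card_union_of_disjoint
      (by simp only [Finset.disjoint_left, Finset.mem_filter]; omega)]
    congr 1; ext j
    by_cases hj : j ∈ s <;> simp only [Finset.mem_filter, Finset.mem_union, hj, true_and,
      false_and, or_false]
    omega
  rw [hsplit]
  split_ifs with hq
  · have hpos : q ∈ s.filter (fun j => p < j ∧ j ≤ q) :=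
      Finset.mem_filter.mpr ⟨hq, hpq, le_rfl⟩
    have hle : #(s.filter (fun j => p < j ∧ j ≤ q)) ≤ #(Finset.Ioc p q) :=
      Finset.card_le_card fun j hj => by simp only [Finset.mem_filter] at hj; simpa using hj.2
    have := Finset.card_pos.mpr ⟨q, hpos⟩
    simp only [Nat.card_Ioc] at hle
    omega
  · have hle : #(s.filter (fun j => p < j ∧ j ≤ q)) ≤ #(Finset.Ioo p q) :=
      Finset.card_le_card fun j hj => by
        simp only [Finset.mem_filter] at hj
        simpa using ⟨hj.2.1, lt_of_le_of_ne hj.2.2 (by rintro rfl; exact hq hj.1)⟩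
    simp only [Nat.card_Ioo] at hle
    omega

lemma maj_insertIdx_mem_Icc (hp : p ≤ u.length) (hM : ∀ x ∈ u, x < M) :
    maj (u.insertIdx p M) ∈ Finset.Icc (maj u) (maj u + u.length) := by
  have h := maj_insertIdx_of_forall_lt hp hM
  have hc : #((ligne u).filter (p < ·)) ≤ u.length - 1 - p := by
    calc #((ligne u).filter (p < ·)) ≤ #(Finset.Ioc p (u.length - 1)) :=
          Finset.card_le_card fun j hj => by
            have := ligne_subset_Icc u (Finset.mem_filter.mp hj).1
            simp only [Finset.mem_filter, Finset.mem_Icc, Finset.mem_Ioc] at hj this ⊢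
            omega
      _ = u.length - 1 - p := Nat.card_Ioc _ _
  rw [Finset.mem_Icc]
  by_cases hpD : p ∈ ligne u
  · have hpL := (mem_ligne.mp hpD).2.1
    simp only [hpD, hpL, if_true] at h
    omega
  · simp only [hpD, if_false] at h
    split_ifs at h <;> omega

lemma maj_insertIdx_injOn (hM : ∀ x ∈ u, x < M) :
    Set.InjOn (fun p => maj (u.insertIdx p M)) (Set.Iic u.length) := by
  suffices ∀ p q, p < q → q ≤ u.length → maj (u.insertIdx p M) ≠ maj (u.insertIdx q M) by
    intro p hp q hq hpq
    by_contra hne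
    rcases Nat.lt_or_gt_of_ne hne with h | h
    · exact this p q h hq hpq
    · exact this q p h hp hpq.symm
  intro p q hpq hq heq
  have Ep := maj_insertIdx_of_forall_lt (hpq.le.trans hq) hM
  have Eq := maj_insertIdx_of_forall_lt hq hM
  have hc := card_filter_lt_bounds (s := ligne u) hpq
  simp only [show p < u.length by omega, if_true] at Ep
  by_cases hqD : q ∈ ligne u
  · have hqL := (mem_ligne.mp hqD).2.1
    simp only [hqD, hqL, if_true] at Eq hc
    split_ifs at Ep <;> omega
  · simp only [hqD, if_false] at Eq hc
    split_ifs at Ep Eq <;> omega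

lemma image_maj_insertIdx (hM : ∀ x ∈ u, x < M) :
    (Finset.Iic u.length).image (fun p => maj (u.insertIdx p M))
      = Finset.Icc (maj u) (maj u + u.length) := by
  refine Finset.eq_of_subset_of_card_le ?_ ?_
  · simp only [Finset.subset_iff, Finset.mem_image, Finset.mem_Iic]
    rintro _ ⟨p, hp, rfl⟩
    exact maj_insertIdx_mem_Icc hp hM
  · rw [Finset.card_image_of_injOn (by simpa using maj_insertIdx_injOn hM)]
    simp only [Nat.card_Icc, Nat.card_Iic]
    omega

end InsertMax

lemma List.filter_le_succ_eq_insertIdx {w : List ℕ} {k : ℕ} (hw : w.Nodup) (hk : k + 1 ∈ w) :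
    ∃ p ≤ (w.filter (· ≤ k)).length,
      w.filter (· ≤ k + 1) = (w.filter (· ≤ k)).insertIdx p (k + 1) := by
  induction w with
  | nil => simp at hk
  | cons a w ih =>
    obtain ⟨haw, hw⟩ := List.nodup_cons.mp hw
    by_cases ha : a = k + 1
    · refine ⟨0, Nat.zero_le _, ?_⟩
      rw [List.insertIdx_zero, List.filter_cons_of_pos (by simp [ha]),
        List.filter_cons_of_neg (by simp [ha]), ha]
      congr 1
      refine List.filter_congr fun x hx => ?_
      have : x ≠ a := fun h => haw (h ▸ hx)
      simp only [decide_eq_decide]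
      omega
    · obtain ⟨p, hp, he⟩ := ih hw (by simpa [Ne.symm ha] using hk)
      by_cases hak : a ≤ k
      · refine ⟨p + 1, ?_, ?_⟩
        · simpa [List.filter_cons, hak] using hp
        · simp [hak, show a ≤ k + 1 by omega, he, List.insertIdx_succ_cons]
      · refine ⟨p, by simpa [List.filter_cons, hak] using hp, ?_⟩
        simpa [List.filter_cons, hak, show ¬ a ≤ k + 1 by omega] using he

namespace IsPermWord

variable {n : ℕ} {w : List ℕ}

lemma length (h : IsPermWord n w) : w.length = n := by
  rw [h.length_eq, List.length_range']

lemma mem_iff (h : IsPermWord n w) {x : ℕ} : x ∈ w ↔ 1 ≤ x ∧ x ≤ n := by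
  rw [List.Perm.mem_iff h, List.mem_range'_1]
  omega

lemma nodup (h : IsPermWord n w) : w.Nodup :=
  h.nodup_iff.mpr List.nodup_range'

lemma filter_le (h : IsPermWord n w) {k : ℕ} (hk : k ≤ n) :
    IsPermWord k (w.filter (· ≤ k)) := by
  obtain ⟨j, rfl⟩ := Nat.exists_eq_add_of_le hk
  have hlow : (List.range' 1 k).filter (· ≤ k) = List.range' 1 k :=
    List.filter_eq_self.mpr fun x hx => by simp [List.mem_range'_1] at hx ⊢; omega
  have hhigh : (List.range' (1 + k) j).filter (· ≤ k) = [] :=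
    List.filter_eq_nil_iff.mpr fun x hx => by simp [List.mem_range'_1] at hx ⊢; omega
  have hsplit := List.Perm.filter (· ≤ k) h
  rw [← List.range'_append_1, List.filter_append, hlow, hhigh, List.append_nil] at hsplit
  exact hsplit

lemma filter_le_self (h : IsPermWord n w) : w.filter (· ≤ n) = w :=
  List.filter_eq_self.mpr fun x hx => by simpa using (h.mem_iff.mp hx).2

lemma insertIdx (h : IsPermWord n w) {p : ℕ} (hp : p ≤ n) :
    IsPermWord (n + 1) (w.insertIdx p (n + 1)) := by
  refine (List.perm_insertIdx _ _ (h.length ▸ hp)).trans ?_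
  rw [List.range'_concat, one_mul, add_comm 1 n]
  exact ((h.cons _).trans (List.perm_append_singleton _ _).symm)

lemma exists_filter_le_succ_eq_insertIdx (h : IsPermWord n w) {k : ℕ} (hk : k < n) :
    ∃ p ≤ k, w.filter (· ≤ k + 1) = (w.filter (· ≤ k)).insertIdx p (k + 1) := by
  obtain ⟨p, hp, he⟩ :=
    List.filter_le_succ_eq_insertIdx h.nodup (h.mem_iff.mpr ⟨by omega, hk⟩)
  exact ⟨p, (h.filter_le hk.le).length ▸ hp, he⟩

lemma maj_filter_le_succ_mem_Icc (h : IsPermWord n w) {k : ℕ} (hk : k < n) :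
    maj (w.filter (· ≤ k + 1)) ∈
      Finset.Icc (maj (w.filter (· ≤ k))) (maj (w.filter (· ≤ k)) + k) := by
  obtain ⟨p, hp, he⟩ := h.exists_filter_le_succ_eq_insertIdx hk
  have hlen := (h.filter_le hk.le).length
  have hlt : ∀ x ∈ w.filter (· ≤ k), x < k + 1 := fun x hx => by
    rw [List.mem_filter, decide_eq_true_iff] at hx
    omega
  rw [he]
  have := maj_insertIdx_mem_Icc (hlen ▸ hp) hlt
  rwa [hlen] at this

end IsPermWord

lemma majcode_length (w : List ℕ) : (majcode w).length = w.length := by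
  simp [majcode]

lemma majcode_getD {w : List ℕ} {i : ℕ} (hi : i < w.length) :
    (majcode w).getD i 0 = maj (w.filter (· ≤ i + 1)) - maj (w.filter (· ≤ i)) := by
  simp [majcode, List.getD_eq_getElem?_getD, hi]

lemma IsPermWord.subexcedent_majcode {n : ℕ} {w : List ℕ} (h : IsPermWord n w) :
    Subexcedent (majcode w) := by
  intro i hi
  rw [majcode_length] at hi
  have := Finset.mem_Icc.mp (h.maj_filter_le_succ_mem_Icc (h.length ▸ hi))
  rw [majcode_getD hi]
  omega

lemma IsPermWord.eq_of_majcode_eq {n : ℕ} {w w' : List ℕ} (hw : IsPermWord n w)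
    (hw' : IsPermWord n w') (h : majcode w = majcode w') : w = w' := by
  suffices ∀ k ≤ n, w.filter (· ≤ k) = w'.filter (· ≤ k) by
    simpa [hw.filter_le_self, hw'.filter_le_self] using this n le_rfl
  intro k hk
  induction k with
  | zero =>
    rw [List.eq_nil_of_length_eq_zero (hw.filter_le hk).length,
      List.eq_nil_of_length_eq_zero (hw'.filter_le hk).length]
  | succ k ih =>
    obtain ⟨p, hp, he⟩ := hw.exists_filter_le_succ_eq_insertIdx hk
    obtain ⟨p', hp', he'⟩ := hw'.exists_filter_le_succ_eq_insertIdx hk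
    have hmaj : maj (w.filter (· ≤ k + 1)) = maj (w'.filter (· ≤ k + 1)) := by
      have hcode := congrArg (·.getD k 0) h
      simp only [majcode_getD (show k < w.length by rw [hw.length]; omega),
        majcode_getD (show k < w'.length by rw [hw'.length]; omega)] at hcode
      have := Finset.mem_Icc.mp (hw.maj_filter_le_succ_mem_Icc hk)
      have := Finset.mem_Icc.mp (hw'.maj_filter_le_succ_mem_Icc hk)
      rw [ih (by omega)] at *
      omega
    have hlen := (hw.filter_le (Nat.le_of_succ_le hk)).length
    rw [he, he', ← ih (by omega)] at hmaj ⊢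
    have hlt : ∀ x ∈ w.filter (· ≤ k), x < k + 1 := fun x hx => by
      rw [List.mem_filter, decide_eq_true_iff] at hx
      omega
    rw [maj_insertIdx_injOn hlt (by rw [Set.mem_Iic, hlen]; omega)
      (by rw [Set.mem_Iic, hlen]; omega) hmaj]

lemma IsPermWord.majcode_insertIdx {n : ℕ} {w : List ℕ} (h : IsPermWord n w) {p : ℕ}
    (hp : p ≤ n) :
    majcode (w.insertIdx p (n + 1)) = majcode w ++ [maj (w.insertIdx p (n + 1)) - maj w] := by
  have hfilter : ∀ j ≤ n, (w.insertIdx p (n + 1)).filter (· ≤ j) = w.filter (· ≤ j) :=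
    fun j hj => List.filter_insertIdx_of_neg (by simp; omega) w p
  rw [majcode, (h.insertIdx hp).length, List.range_succ, List.map_append, majcode, h.length]
  congr 1
  · refine List.map_congr_left fun i hi => ?_
    rw [List.mem_range] at hi
    rw [hfilter _ (by omega), hfilter _ hi.le]
  · rw [List.map_singleton, (h.insertIdx hp).filter_le_self, hfilter n le_rfl, h.filter_le_self]

lemma exists_majcode_eq {e : List ℕ} (he : Subexcedent e) :
    ∃ w, IsPermWord e.length w ∧ majcode w = e := by
  induction e using List.reverseRecOn with
  | nil => exact ⟨[], List.Perm.refl _, rfl⟩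
  | append_singleton e a ih =>
    have hinit : Subexcedent e := fun i hi => by
      have := he i (by simp; omega)
      rwa [List.getD_append _ _ _ _ hi] at this
    have ha : a ≤ e.length := by simpa using he e.length (by simp)
    obtain ⟨w, hw, hcode⟩ := ih hinit
    have hlt : ∀ x ∈ w, x < e.length + 1 := fun x hx => by
      have := hw.mem_iff.mp hx
      omega
    have hmem : maj w + a ∈
        (Finset.Iic w.length).image (fun p => maj (w.insertIdx p (e.length + 1))) := by
      rw [image_maj_insertIdx hlt, Finset.mem_Icc, hw.length]
      omega
    obtain ⟨p, hp, hpa⟩ := Finset.mem_image.mp hmem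
    rw [Finset.mem_Iic, hw.length] at hp
    refine ⟨w.insertIdx p (e.length + 1), by simpa using hw.insertIdx hp, ?_⟩
    rw [hw.majcode_insertIdx hp, hcode, hpa, Nat.add_sub_cancel_left]

lemma ligne_map_tsub {v : List ℕ} {m : ℕ} (hnd : v.Nodup) (hv : ∀ x ∈ v, x ≤ m) :
    ligne (v.map (m + 1 - ·)) = Finset.Icc 1 (v.length - 1) \ ligne v := by
  ext i
  simp only [mem_ligne, List.length_map, Finset.mem_sdiff, Finset.mem_Icc]
  by_cases hi : 1 ≤ i ∧ i < v.length
  · have hi' : i - 1 < v.length := by omega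
    simp only [List.getD_eq_getElem?_getD, List.getElem?_map, List.getElem?_eq_getElem hi.2,
      List.getElem?_eq_getElem hi', Option.map_some, Option.getD_some]
    have hne : v[i - 1] ≠ v[i] := by
      rw [Ne, hnd.getElem_inj_iff]
      omega
    have h₁ := hv _ (List.getElem_mem hi')
    have h₂ := hv _ (List.getElem_mem hi.2)
    omega
  · omega

lemma maj_map_tsub_add_maj {v : List ℕ} {m : ℕ} (hnd : v.Nodup) (hv : ∀ x ∈ v, x ≤ m) :
    maj (v.map (m + 1 - ·)) + maj v = ∑ i ∈ Finset.Icc 1 (v.length - 1), i := by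
  rw [maj, maj, ligne_map_tsub hnd hv, Finset.sum_sdiff (ligne_subset_Icc v)]

def complWord (n : ℕ) (w : List ℕ) : List ℕ := w.map (n + 1 - ·)

namespace IsPermWord

variable {n : ℕ} {w : List ℕ}

lemma isPermWord_complWord (h : IsPermWord n w) : IsPermWord n (complWord n w) := by
  have hnd : (complWord n w).Nodup := h.nodup.map_on fun x hx y hy hxy => by
    have := h.mem_iff.mp hx
    have := h.mem_iff.mp hy
    omega
  refine (List.perm_ext_iff_of_nodup hnd List.nodup_range').mpr fun x => ?_
  simp only [complWord, List.mem_map, h.mem_iff, List.mem_range'_1]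
  constructor
  · rintro ⟨y, hy, rfl⟩
    omega
  · exact fun hx => ⟨n + 1 - x, by omega, by omega⟩

lemma complWord_complWord (h : IsPermWord n w) : complWord n (complWord n w) = w := by
  rw [complWord, complWord, List.map_map]
  refine (List.map_congr_left fun x hx => ?_).trans (List.map_id w)
  have := h.mem_iff.mp hx
  simp only [Function.comp_apply, id_eq]
  omega

lemma ligne_complWord (h : IsPermWord n w) :
    ligne (complWord n w) = Finset.Icc 1 (n - 1) \ ligne w := by
  rw [complWord, ligne_map_tsub h.nodup fun x hx => (h.mem_iff.mp hx).2, h.length]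

lemma filter_complWord {k l : ℕ} (h : IsPermWord n w) (hkl : k + l = n) :
    (complWord n w).filter (k + 1 ≤ ·) = (w.filter (· ≤ l)).map (n + 1 - ·) := by
  rw [complWord, List.filter_map]
  congr 1
  refine List.filter_congr fun x hx => ?_
  have := h.mem_iff.mp hx
  simp only [Function.comp_apply, decide_eq_decide]
  omega

end IsPermWord

lemma mc_length (w : List ℕ) : (mc w).length = w.length := by
  simp [mc]

lemma mc_getD {w : List ℕ} {i : ℕ} (hi : i < w.length) :
    (mc w).getD i 0 = maj (w.filter (i + 1 ≤ ·)) - maj (w.filter (i + 1 + 1 ≤ ·)) := by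
  rw [List.getD_eq_getElem _ _ (by rwa [mc_length])]
  simp only [mc, List.getElem_map, List.getElem_range]

lemma IsPermWord.mc_complWord_getD {n : ℕ} {u : List ℕ} (h : IsPermWord n u) {i j : ℕ}
    (hij : i + j + 1 = n) : (mc (complWord n u)).getD i 0 = j - (majcode u).getD j 0 := by
  have hv : ∀ l, ∀ x ∈ u.filter (· ≤ l), x ≤ n := fun l x hx =>
    (h.mem_iff.mp (List.mem_of_mem_filter hx)).2
  have hsum := maj_map_tsub_add_maj (h.nodup.filter _) (hv (j + 1))
  have hsum' := maj_map_tsub_add_maj (h.nodup.filter _) (hv j)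
  rw [(h.filter_le (by omega : j + 1 ≤ n)).length, Nat.add_sub_cancel] at hsum
  rw [(h.filter_le (by omega : j ≤ n)).length] at hsum'
  have hgauss : ∑ x ∈ Finset.Icc 1 j, x = ∑ x ∈ Finset.Icc 1 (j - 1), x + j := by
    rcases j with _ | j
    · simp
    · rw [Finset.sum_Icc_succ_top (by omega), Nat.add_sub_cancel]
  have hinc := Finset.mem_Icc.mp (h.maj_filter_le_succ_mem_Icc (k := j) (by omega))
  rw [mc_getD (by rw [complWord, List.length_map, h.length]; omega),
    majcode_getD (by rw [h.length]; omega), h.filter_complWord (by omega : i + (j + 1) = n),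
    h.filter_complWord (by omega : i + 1 + j = n)]
  omega

lemma deltaC_getD {e : List ℕ} {i : ℕ} (hi : i < e.length) :
    (deltaC e).getD i 0 = i - e.getD i 0 := by
  simp [deltaC, List.getD_eq_getElem?_getD, hi]

lemma IsPermWord.reverse_mc_complWord {n : ℕ} {u : List ℕ} (h : IsPermWord n u) :
    (mc (complWord n u)).reverse = deltaC (majcode u) := by
  have hlen : (mc (complWord n u)).length = n := by
    rw [mc_length, complWord, List.length_map, h.length]
  refine List.ext_getElem (by simp [hlen, deltaC, majcode_length, h.length]) fun j h₁ h₂ => ?_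
  rw [List.length_reverse, hlen] at h₁
  rw [List.getElem_reverse, ← List.getD_eq_getElem _ 0, ← List.getD_eq_getElem _ 0,
    h.mc_complWord_getD (j := j) (by omega),
    deltaC_getD (by rw [majcode_length, h.length]; exact h₁)]

lemma subexcedent_deltaC (e : List ℕ) : Subexcedent (deltaC e) := fun i hi => by
  rw [deltaC_getD (by simpa [deltaC] using hi)]
  omega

lemma Subexcedent.deltaC_deltaC {e : List ℕ} (h : Subexcedent e) : deltaC (deltaC e) = e := by
  refine List.ext_getElem (by simp [deltaC]) fun i h₁ h₂ => ?_
  have := h i h₂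
  rw [List.getD_eq_getElem _ _ h₂] at this
  simp only [deltaC, List.getD_eq_getElem?_getD, List.getElem?_map, List.length_map,
    List.length_range, List.getElem_map, List.getElem_range, h₂, getElem?_pos, Option.map_some,
    Option.getD_some]
  omega

lemma Subdiagonal.subexcedent_reverse {d : List ℕ} (h : Subdiagonal d) : Subexcedent d.reverse :=
  fun i hi => by
    rw [List.length_reverse] at hi
    rw [List.getD_reverse i hi]
    have := h (d.length - 1 - i) (by omega)
    omega

lemma IsPermWord.majcode_complWord {n : ℕ} {w : List ℕ} (h : IsPermWord n w) :
    majcode (complWord n w) = deltaC (mc w).reverse := by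
  rw [← h.complWord_complWord, h.isPermWord_complWord.reverse_mc_complWord,
    h.complWord_complWord, h.isPermWord_complWord.subexcedent_majcode.deltaC_deltaC]

lemma IsPermWord.eq_of_mc_eq {n : ℕ} {w w' : List ℕ} (hw : IsPermWord n w)
    (hw' : IsPermWord n w') (h : mc w = mc w') : w = w' := by
  have := hw.isPermWord_complWord.eq_of_majcode_eq hw'.isPermWord_complWord
    (by rw [hw.majcode_complWord, hw'.majcode_complWord, h])
  rw [← hw.complWord_complWord, this, hw'.complWord_complWord]

lemma IsPermWord.El_mc {n : ℕ} {w : List ℕ} (h : IsPermWord n w) : El (mc w) = ligne w := by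
  have hex : ∃ v, IsPermWord (mc w).length v ∧ mc v = mc w :=
    ⟨w, by rwa [mc_length, h.length], rfl⟩
  rw [El, dif_pos hex]
  obtain ⟨hv, hmc⟩ := hex.choose_spec
  generalize hex.choose = v at hv hmc ⊢
  rw [mc_length, h.length] at hv
  rw [hv.eq_of_mc_eq h hmc]

lemma IsPermWord.Eul_majcode {n : ℕ} {w : List ℕ} (h : IsPermWord n w) :
    Eul (majcode w) = ligne w := by
  have hex : ∃ v, IsPermWord (majcode w).length v ∧ majcode v = majcode w :=
    ⟨w, by rwa [majcode_length, h.length], rfl⟩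
  rw [Eul, dif_pos hex]
  obtain ⟨hv, hcode⟩ := hex.choose_spec
  generalize hex.choose = v at hv hcode ⊢
  rw [majcode_length, h.length] at hv
  rw [hv.eq_of_majcode_eq h hcode]

theorem stmt16 (d : List ℕ) (hd : Subdiagonal d) :
    El d = Finset.Icc 1 (d.length - 1) \ Eul (deltaC d.reverse) := by
  obtain ⟨u, hu, hcode⟩ := exists_majcode_eq (subexcedent_deltaC d.reverse)
  rw [deltaC, List.length_map, List.length_range, List.length_reverse] at hu
  have hmc : mc (complWord d.length u) = d := by
    rw [← List.reverse_inj, hu.reverse_mc_complWord, hcode, hd.subexcedent_reverse.deltaC_deltaC]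
  calc El d = ligne (complWord d.length u) := by rw [← hu.isPermWord_complWord.El_mc, hmc]
    _ = Finset.Icc 1 (d.length - 1) \ ligne u := hu.ligne_complWord
    _ = Finset.Icc 1 (d.length - 1) \ Eul (deltaC d.reverse) := by rw [← hcode, hu.Eul_majcode]
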